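/- Consider ẏ = A(t)y with A continuous and T-periodic, monodromy eigenvalues μ₁ = 1 (simple, eigenvector ẋ₀(0)) and |μⱼ| < 1 for j ≥ 2. Pick solutions y₁,…,y_{n-1} of the system whose values at time θ₀ are orthogonal to z₀(θ₀), where z₀ is the normalized T-periodic adjoint solution. Then the n×(n-1) matrix Y₁(θ) = (y₁(θ)|…|y_{n-1}(θ)) satisfies Y₁(θ + T) = Y₁(θ)A_θ for some (n-1)×(n-1) matrix A_θ whose eigenvalues are μ₂, …, μₙ. -/

import Mathlib

/-!
By Perron's lemma every `yₖ(t)` stays orthogonal to `z₀(t)`. At `t = 0` the `yₖ(0)` therefore span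
the hyperplane `z₀(0)^⊥`, which `Y(T)` maps into `z₀(T)^⊥ = z₀(0)^⊥`; together with the eigenvector
`ẋ₀(0)`, which is not in that hyperplane, they form a basis in which `Y(T)` is block diagonal
`diag(1, B)`. Uniqueness of solutions gives `Y₁(t) = Y(t) Y₁(0)` and, `A` being `T`-periodic,
`Y₁(θ + T) = Y(θ) Y₁(T) = Y(θ) Y₁(0) B = Y₁(θ) B`, so `A_θ = B` for every `θ`.
-/

open Matrix Polynomial Set

theorem ODE_solution_unique_of_continuous_clm {E : Type*} [NormedAddCommGroup E]
    [NormedSpace ℝ E] {L : ℝ → E →L[ℝ] E} (hL : Continuous L) {f g : ℝ → E}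
    (hf : ∀ t, HasDerivAt f (L t (f t)) t) (hg : ∀ t, HasDerivAt g (L t (g t)) t) {t₀ : ℝ}
    (heq : f t₀ = g t₀) : f = g := by
  funext t
  obtain ⟨a, b, ht, ht₀⟩ : ∃ a b, t ∈ Ioo a b ∧ t₀ ∈ Ioo a b :=
    ⟨min t t₀ - 1, max t t₀ + 1, by grind⟩
  obtain ⟨C, hC⟩ := (isCompact_Icc (a := a) (b := b)).exists_bound_of_continuousOn hL.continuousOn
  have hlip : ∀ s ∈ Ioo a b, LipschitzOnWith C.toNNReal (L s) univ := fun s hs =>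
    ((L s).lipschitz.weaken <| (Real.le_toNNReal_iff_coe_le ((norm_nonneg _).trans
      (hC s (Ioo_subset_Icc_self hs)))).2 (hC s (Ioo_subset_Icc_self hs))).lipschitzOnWith
  exact ODE_solution_unique_of_mem_Ioo hlip ht₀ (fun s _ => ⟨hf s, mem_univ _⟩)
    (fun s _ => ⟨hg s, mem_univ _⟩) heq ht

theorem HasDerivAt.dotProduct {ι : Type*} [Fintype ι] {f g : ℝ → ι → ℝ} {f' g' : ι → ℝ} {t : ℝ}
    (hf : HasDerivAt f f' t) (hg : HasDerivAt g g' t) :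
    HasDerivAt (fun s => f s ⬝ᵥ g s) (f' ⬝ᵥ g t + f t ⬝ᵥ g') t := by
  unfold _root_.dotProduct
  rw [← Finset.sum_add_distrib]
  exact HasDerivAt.fun_sum fun i _ => (hasDerivAt_pi.1 hf i).mul (hasDerivAt_pi.1 hg i)

section LinearODE

variable {ι : Type*} [Fintype ι] {A : ℝ → Matrix ι ι ℝ}

def IsLinODESolution (A : ℝ → Matrix ι ι ℝ) (f : ℝ → ι → ℝ) : Prop :=
  ∀ t, HasDerivAt f (A t *ᵥ f t) t

namespace IsLinODESolution

theorem eq_of_eq_at (hA : Continuous fun p : ℝ × (ι → ℝ) => A p.1 *ᵥ p.2) {f g : ℝ → ι → ℝ}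
    (hf : IsLinODESolution A f) (hg : IsLinODESolution A g) {t₀ : ℝ} (h : f t₀ = g t₀) :
    f = g := by
  let L : ℝ → (ι → ℝ) →L[ℝ] (ι → ℝ) := fun t => LinearMap.toContinuousLinearMap (A t).mulVecLin
  have hL : Continuous L := continuous_clm_apply.2 fun y =>
    hA.comp (continuous_id.prodMk continuous_const)
  exact ODE_solution_unique_of_continuous_clm hL hf hg h

theorem eq_mulVec [DecidableEq ι] (hA : Continuous fun p : ℝ × (ι → ℝ) => A p.1 *ᵥ p.2)
    {Y : ℝ → Matrix ι ι ℝ} (hY : ∀ v, IsLinODESolution A fun t => Y t *ᵥ v) (hY0 : Y 0 = 1)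
    {f : ℝ → ι → ℝ} (hf : IsLinODESolution A f) (t : ℝ) : f t = Y t *ᵥ f 0 :=
  congrFun (hf.eq_of_eq_at hA (hY (f 0)) (t₀ := 0) (by simp [hY0])) t

theorem comp_add_const {T : ℝ} (hA : ∀ t, A (t + T) = A t) {f : ℝ → ι → ℝ}
    (hf : IsLinODESolution A f) : IsLinODESolution A fun t => f (t + T) := fun t => by
  simpa [hA] using (hf (t + T)).comp_add_const t T

theorem dotProduct_eq {f z : ℝ → ι → ℝ} (hf : IsLinODESolution A f)
    (hz : ∀ t, HasDerivAt z (-((A t)ᵀ *ᵥ z t)) t) (s t : ℝ) : f s ⬝ᵥ z s = f t ⬝ᵥ z t := by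
  have hderiv : ∀ r, HasDerivAt (fun r => f r ⬝ᵥ z r) 0 r := fun r => by
    convert (hf r).dotProduct (hz r) using 1
    simp [dotProduct_mulVec, mulVec_transpose, dotProduct_comm]
  exact is_const_of_deriv_eq_zero (fun r => (hderiv r).differentiableAt)
    (fun r => (hderiv r).deriv) s t

theorem cols_eq_mul_cols_zero [DecidableEq ι]
    (hA : Continuous fun p : ℝ × (ι → ℝ) => A p.1 *ᵥ p.2) {Y : ℝ → Matrix ι ι ℝ}
    (hY : ∀ v, IsLinODESolution A fun t => Y t *ᵥ v) (hY0 : Y 0 = 1) {κ : Type*}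
    {ys : κ → ℝ → ι → ℝ} (hys : ∀ k, IsLinODESolution A (ys k)) (t : ℝ) :
    (of fun i k => ys k t i : Matrix ι κ ℝ) = Y t * of fun i k => ys k 0 i := by
  ext i k
  simp [(hys k).eq_mulVec hA hY hY0 t, mul_apply, mulVec, dotProduct]

end IsLinODESolution

end LinearODE

section LinearAlgebra

variable {K V : Type*} [Field K] [AddCommGroup V] [Module K V] {m : ℕ}

theorem linearIndependent_fin_cons_of_map_eq_zero (φ : V →ₗ[K] K) {v : V} {w : Fin m → V}
    (hw : LinearIndependent K w) (hv : φ v ≠ 0) (hφw : ∀ k, φ (w k) = 0) :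
    LinearIndependent K (Fin.cons v w : Fin (m + 1) → V) :=
  hw.finCons fun hmem => hv <|
    Submodule.span_le.2 (range_subset_iff.2 fun k => LinearMap.mem_ker.2 (hφw k)) hmem

theorem mem_span_of_map_eq_zero [FiniteDimensional K V] (φ : V →ₗ[K] K) {v : V}
    {w : Fin m → V} (hli : LinearIndependent K (Fin.cons v w : Fin (m + 1) → V))
    (hdim : Module.finrank K V = m + 1) (hv : φ v ≠ 0) (hφw : ∀ k, φ (w k) = 0) {u : V}
    (hu : φ u = 0) : u ∈ Submodule.span K (range w) := by
  have htop := hli.span_eq_top_of_card_eq_finrank' (by simp [hdim])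
  obtain ⟨a, x, hx, rfl⟩ := Submodule.mem_span_insert.1
    (Fin.range_cons v w ▸ htop ▸ Submodule.mem_top (x := u))
  have hφx : φ x = 0 :=
    Submodule.span_le.2 (range_subset_iff.2 fun k => LinearMap.mem_ker.2 (hφw k)) hx
  have ha : a = 0 := by simpa [hφx, hv] using hu
  simpa [ha] using hx

end LinearAlgebra

namespace Matrix

theorem exists_mul_eq_mul_of_mulVec_col_mem_span {R n p : Type*} [CommSemiring R] [Fintype n]
    [Fintype p] {M : Matrix n n R} {W : Matrix n p R}
    (h : ∀ k, M *ᵥ W.col k ∈ Submodule.span R (range W.col)) :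
    ∃ B : Matrix p p R, M * W = W * B := by
  choose c hc using fun k => (Submodule.mem_span_range_iff_exists_fun R).1 (h k)
  refine ⟨of fun j k => c k j, ?_⟩
  ext i k
  simpa [mul_apply, mulVec, dotProduct, mul_comm] using (congrFun (hc k) i).symm

theorem charpoly_eq_of_mul_eq_mul {R n : Type*} [CommRing R] [Fintype n] [DecidableEq n]
    {M P D : Matrix n n R} (hP : IsUnit P) (h : M * P = P * D) : M.charpoly = D.charpoly := by
  obtain ⟨U, rfl⟩ := hP
  rw [← charpoly_units_conj' U M, mul_assoc, h, ← mul_assoc, nonsing_inv_mul _ ?_, one_mul]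
  exact (isUnit_iff_isUnit_det _).1 U.isUnit

theorem charpoly_eq_X_sub_C_mul_of_col_zero {R : Type*} [CommRing R] {m : ℕ}
    (D : Matrix (Fin (m + 1)) (Fin (m + 1)) R) (h : ∀ i : Fin m, D i.succ 0 = 0) :
    D.charpoly = (X - C (D 0 0)) * (D.submatrix Fin.succ Fin.succ).charpoly := by
  rw [charpoly, det_succ_column_zero, Fin.sum_univ_succ, Finset.sum_eq_zero fun i _ => by
    rw [charmatrix_apply_ne _ _ _ (Fin.succ_ne_zero i), h]; simp]
  have hsub : (charmatrix D).submatrix Fin.succ Fin.succ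
      = charmatrix (D.submatrix Fin.succ Fin.succ) := by
    ext i j
    simp [charmatrix_apply, diagonal_apply]
  simp [charpoly, charmatrix_apply_eq, hsub]

theorem charpoly_eq_X_sub_C_mul_of_mulVec_eq_smul {K : Type*} [Field K] {m : ℕ}
    {M : Matrix (Fin (m + 1)) (Fin (m + 1)) K} {v : Fin (m + 1) → K}
    {W : Matrix (Fin (m + 1)) (Fin m) K} {B : Matrix (Fin m) (Fin m) K} {μ : K}
    (hli : LinearIndependent K (Fin.cons v W.col : Fin (m + 1) → Fin (m + 1) → K))
    (hv : M *ᵥ v = μ • v) (hW : M * W = W * B) :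
    M.charpoly = (X - C μ) * B.charpoly := by
  let P : Matrix (Fin (m + 1)) (Fin (m + 1)) K :=
    of fun i j => (Fin.cons v W.col : Fin (m + 1) → Fin (m + 1) → K) j i
  let D : Matrix (Fin (m + 1)) (Fin (m + 1)) K :=
    of (Fin.cons (Fin.cons μ 0) fun i => Fin.cons 0 (B i))
  have hMP : M * P = P * D := by
    ext i j
    refine Fin.cases ?_ (fun k => ?_) j
    · simpa [P, D, mul_apply, Fin.sum_univ_succ, mulVec, dotProduct, mul_comm] using congrFun hv i
    · simpa [P, D, mul_apply, Fin.sum_univ_succ] using congrFun₂ hW i k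
  rw [charpoly_eq_of_mul_eq_mul (linearIndependent_cols_iff_isUnit.1 hli) hMP,
    charpoly_eq_X_sub_C_mul_of_col_zero D fun i => by simp [D]]
  congr 2

end Matrix

theorem tube_matrix_monodromy_general {m : ℕ}
    (T : ℝ)
    (A : ℝ → Matrix (Fin (m + 1)) (Fin (m + 1)) ℝ)
    (hAcont : Continuous fun p : ℝ × (Fin (m + 1) → ℝ) => (A p.1).mulVec p.2)
    (hAper : ∀ t, A (t + T) = A t)
    (Y : ℝ → Matrix (Fin (m + 1)) (Fin (m + 1)) ℝ)
    (hY : ∀ (v : Fin (m + 1) → ℝ) (t : ℝ),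
      HasDerivAt (fun s => (Y s).mulVec v) ((A t).mulVec ((Y t).mulVec v)) t)
    (hY0 : Y 0 = 1)
    -- `ẋ₀` : a nontrivial `T`-periodic solution of the system
    (x₀' : ℝ → Fin (m + 1) → ℝ)
    -- `μ₁ = 1` is a simple Floquet multiplier with eigenvector `ẋ₀(0)` …
    (heigvec : (Y T).mulVec (x₀' 0) = x₀' 0)
    -- `z₀` : the normalized `T`-periodic adjoint solution
    (z₀ : ℝ → Fin (m + 1) → ℝ)
    (hz₀ : ∀ t, HasDerivAt z₀ (-(A t)ᵀ.mulVec (z₀ t)) t)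
    (hz₀per : ∀ t, z₀ (t + T) = z₀ t)
    (hnorm : ∀ t, x₀' t ⬝ᵥ z₀ t = 1)
    -- the chosen solutions `y₁, …, y_{n-1}`
    (θ₀ : ℝ) (ys : Fin m → ℝ → Fin (m + 1) → ℝ)
    (hys : ∀ (k : Fin m) (t : ℝ), HasDerivAt (ys k) ((A t).mulVec (ys k t)) t)
    (horth : ∀ k : Fin m, ys k θ₀ ⬝ᵥ z₀ θ₀ = 0)
    (hindep : LinearIndependent ℝ (fun k : Fin m => ys k θ₀)) :
    ∀ θ : ℝ, ∃ Aθ : Matrix (Fin m) (Fin m) ℝ,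
      (Matrix.of fun i k => ys k (θ + T) i : Matrix (Fin (m + 1)) (Fin m) ℝ) =
        (Matrix.of fun i k => ys k θ i : Matrix (Fin (m + 1)) (Fin m) ℝ) * Aθ ∧
      (Y T).charpoly = (X - C 1) * Aθ.charpoly := by
  intro θ
  have hsol : ∀ k, IsLinODESolution A (ys k) := hys
  have hcols : ∀ {ys : Fin m → ℝ → Fin (m + 1) → ℝ}, (∀ k, IsLinODESolution A (ys k)) → ∀ t,
      (of fun i k => ys k t i : Matrix (Fin (m + 1)) (Fin m) ℝ) = Y t * of fun i k => ys k 0 i :=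
    IsLinODESolution.cols_eq_mul_cols_zero hAcont hY hY0
  have horth0 : ∀ k, ys k 0 ⬝ᵥ z₀ 0 = 0 := fun k =>
    ((hsol k).dotProduct_eq hz₀ 0 θ₀).trans (horth k)
  let φ : (Fin (m + 1) → ℝ) →ₗ[ℝ] ℝ := (dotProductBilin ℝ ℝ).flip (z₀ 0)
  have hφx₀ : φ (x₀' 0) ≠ 0 := by simp [φ, hnorm 0]
  have hind0 : LinearIndependent ℝ fun k => ys k 0 := by
    refine LinearIndependent.of_comp (Y θ₀).mulVecLin ?_
    simpa [Function.comp_def, ← (hsol _).eq_mulVec hAcont hY hY0] using hindep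
  have hli := linearIndependent_fin_cons_of_map_eq_zero φ hind0 hφx₀ horth0
  have hinv : ∀ k, Y T *ᵥ ys k 0 ∈ Submodule.span ℝ (Set.range fun k => ys k 0) := fun k => by
    refine mem_span_of_map_eq_zero φ hli (by simp) hφx₀ horth0 ?_
    have hz₀T : z₀ T = z₀ 0 := by simpa using hz₀per 0
    simp only [φ, LinearMap.flip_apply, dotProductBilin_apply_apply]
    rw [← (hsol k).eq_mulVec hAcont hY hY0, ← hz₀T, (hsol k).dotProduct_eq hz₀ T θ₀, horth k]
  obtain ⟨B, hB⟩ := exists_mul_eq_mul_of_mulVec_col_mem_span (W := of fun i k => ys k 0 i) hinv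
  refine ⟨B, ?_, charpoly_eq_X_sub_C_mul_of_mulVec_eq_smul hli (by simpa using heigvec) hB⟩
  calc (of fun i k => ys k (θ + T) i : Matrix (Fin (m + 1)) (Fin m) ℝ)
      = Y θ * of fun i k => ys k (0 + T) i :=
        hcols (fun k => (hsol k).comp_add_const hAper) θ
    _ = Y θ * (Y T * of fun i k => ys k 0 i) := by rw [zero_add, hcols hsol T]
    _ = (of fun i k => ys k θ i) * B := by rw [hB, ← Matrix.mul_assoc, ← hcols hsol θ]

/-- Let `y₁, …, y_{n-1}` be linearly independent solutions of `ẏ = A(t)y` whose values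
at `θ₀` are orthogonal to `z₀(θ₀)`. Then `Y₁(θ) = (y₁(θ)|…|y_{n-1}(θ))` satisfies
`Y₁(θ+T) = Y₁(θ) A_θ` for some matrix `A_θ` whose eigenvalues are the nontrivial
Floquet multipliers `μ₂, …, μₙ` (equivalently, `charpoly Y(T) = (X - 1)·charpoly A_θ`). -/
theorem tube_matrix_monodromy {m : ℕ}
    (T : ℝ) (hT : 0 < T)
    (A : ℝ → Matrix (Fin (m + 1)) (Fin (m + 1)) ℝ)
    (hAcont : Continuous fun p : ℝ × (Fin (m + 1) → ℝ) => (A p.1).mulVec p.2)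
    (hAper : ∀ t, A (t + T) = A t)
    (Y : ℝ → Matrix (Fin (m + 1)) (Fin (m + 1)) ℝ)
    (hY : ∀ (v : Fin (m + 1) → ℝ) (t : ℝ),
      HasDerivAt (fun s => (Y s).mulVec v) ((A t).mulVec ((Y t).mulVec v)) t)
    (hY0 : Y 0 = 1)
    -- `ẋ₀` : a nontrivial `T`-periodic solution of the system
    (x₀' : ℝ → Fin (m + 1) → ℝ)
    (hx₀'sol : ∀ t, HasDerivAt x₀' ((A t).mulVec (x₀' t)) t)
    (hx₀'per : ∀ t, x₀' (t + T) = x₀' t)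
    -- `μ₁ = 1` is a simple Floquet multiplier with eigenvector `ẋ₀(0)` …
    (heigvec : (Y T).mulVec (x₀' 0) = x₀' 0) (hne : x₀' 0 ≠ 0)
    (hsimple : ((Y T).charpoly.map (algebraMap ℝ ℂ)).rootMultiplicity 1 = 1)
    -- … and all other Floquet multipliers have modulus `< 1`
    (hspec : ∀ μ : ℂ, μ ≠ 1 → ((Y T).charpoly.map (algebraMap ℝ ℂ)).IsRoot μ → ‖μ‖ < 1)
    -- `z₀` : the normalized `T`-periodic adjoint solution
    (z₀ : ℝ → Fin (m + 1) → ℝ)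
    (hz₀ : ∀ t, HasDerivAt z₀ (-(A t)ᵀ.mulVec (z₀ t)) t)
    (hz₀per : ∀ t, z₀ (t + T) = z₀ t)
    (hnorm : ∀ t, x₀' t ⬝ᵥ z₀ t = 1)
    -- the chosen solutions `y₁, …, y_{n-1}`
    (θ₀ : ℝ) (ys : Fin m → ℝ → Fin (m + 1) → ℝ)
    (hys : ∀ (k : Fin m) (t : ℝ), HasDerivAt (ys k) ((A t).mulVec (ys k t)) t)
    (horth : ∀ k : Fin m, ys k θ₀ ⬝ᵥ z₀ θ₀ = 0)
    (hindep : LinearIndependent ℝ (fun k : Fin m => ys k θ₀)) :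
    ∀ θ : ℝ, ∃ Aθ : Matrix (Fin m) (Fin m) ℝ,
      (Matrix.of fun i k => ys k (θ + T) i : Matrix (Fin (m + 1)) (Fin m) ℝ) =
        (Matrix.of fun i k => ys k θ i : Matrix (Fin (m + 1)) (Fin m) ℝ) * Aθ ∧
      (Y T).charpoly = (X - C 1) * Aθ.charpoly :=
  tube_matrix_monodromy_general T A hAcont hAper Y hY hY0 x₀' heigvec z₀ hz₀ hz₀per hnorm θ₀ ys hys
    horth hindep
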